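/- arXiv:0904.3938 — 4 statements merged into one kernel-verified Lean document; each statement's English description precedes it below -/
import Mathlib

section
/- Let p be an odd prime. With π_i as above, the field ℚ_p(μ_{p^n}) decomposes as a ℚ_p-vector space into the direct sum ⊕_{i=0}^{n} ℚ_p^{(i)}, where ℚ_p^{(i)} is the ℚ_p-span of the Galois conjugates {π_i^σ : σ ∈ Gal(ℚ_p(μ_{p^i})/ℚ_p)}. -/
/-!
Every `p ^ n`-th root of unity is a primitive `p ^ m`-th root for some `m ≤ n`, hence (the
cyclotomic polynomials `Φ_{p^m}` being Eisenstein over `ℤ_p`) a Galois conjugate of `ζ_m`; so the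
spans `ℚ_p^{(i)}` together span `ℚ_p(ζ_{p^n})`, of dimension `φ(p ^ n)`. The sum is direct because
the dimensions already add up to at most `φ(p ^ n)`: the conjugates of `π_1` are the `p - 1`
elements `ω + 1/(p-1)`, `ω` a primitive `p`-th root, and they sum to `0`; for `i ≥ 2` the
conjugates of `ζ_i` are the `ζ_i ^ b ω ^ j` (`b` prime to `p` modulo `p ^ (i-1)`, `j < p`), whose
sums over `j` vanish. Hence `dim ℚ_p^{(i)} ≤ φ(p ^ i) - φ(p ^ (i-1))` for `i ≥ 1`.
-/

open Polynomial IntermediateField Module Submodule Finset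

section LinearAlgebra

variable {F V : Type*} [Field F] [AddCommGroup V] [Module F V]

theorem iSupIndep_of_sum_finrank_le {ι : Type*} [Fintype ι] {W : ι → Submodule F V}
    [∀ i, FiniteDimensional F (W i)] (h : ∑ i, finrank F (W i) ≤ finrank F ↥(⨆ i, W i)) :
    iSupIndep W := by
  classical
  let φ : (DirectSum ι fun i => W i) →ₗ[F] V := DFinsupp.lsum ℕ fun i => (W i).subtype
  have hrank := φ.finrank_range_add_finrank_ker
  rw [← iSup_eq_range_dfinsupp_lsum fun i => W i, finrank_directSum] at hrank
  have hker : finrank F (LinearMap.ker φ) = 0 := by omega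
  exact iSupIndep_of_dfinsupp_lsum_injective W
    (LinearMap.ker_eq_bot.mp (finrank_eq_zero.mp hker))

theorem finrank_span_image₂_le_of_sum_eq_zero [DecidableEq V] {ι κ : Type*} (v : ι → κ → V)
    (s : Finset ι) (t : Finset κ) (hsum : ∀ i ∈ s, ∑ j ∈ t, v i j = 0) :
    finrank F (span F (image₂ v s t : Set V)) ≤ #s * (#t - 1) := by
  classical
  obtain rfl | ⟨j₀, hj₀⟩ := t.eq_empty_or_nonempty
  · simp
  have hle : span F (image₂ v s t : Set V) ≤ span F (image₂ v s (t.erase j₀) : Set V) := by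
    refine span_le.mpr ?_
    rintro _ hx
    obtain ⟨i, hi, j, hj, rfl⟩ := mem_image₂.mp hx
    have hmem : ∀ j ∈ t.erase j₀, v i j ∈ span F (image₂ v s (t.erase j₀) : Set V) :=
      fun j hj => subset_span (mem_image₂_of_mem hi hj)
    by_cases hjj : j = j₀
    · rw [hjj, eq_neg_of_add_eq_zero_left ((add_sum_erase t (v i) hj₀).trans (hsum i hi))]
      exact neg_mem (sum_mem hmem)
    · exact hmem j (mem_erase.mpr ⟨hjj, hj⟩)
  calc finrank F (span F (image₂ v s t : Set V))
      ≤ finrank F (span F (image₂ v s (t.erase j₀) : Set V)) := finrank_mono hle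
    _ ≤ #(image₂ v s (t.erase j₀)) := finrank_span_finset_le_card _
    _ ≤ #s * #(t.erase j₀) := card_image₂_le _ _ _
    _ = #s * (#t - 1) := by rw [card_erase_of_mem hj₀]

end LinearAlgebra

theorem Finset.sum_range_succ_le_of_add_le {a f : ℕ → ℕ} (h0 : a 0 ≤ f 0)
    (hsucc : ∀ i, a (i + 1) + f i ≤ f (i + 1)) (n : ℕ) : ∑ i ∈ range (n + 1), a i ≤ f n := by
  induction n with
  | zero => simpa using h0
  | succ n ih =>
    rw [sum_range_succ]
    have := hsucc n
    omega

section Conjugates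

variable (F : Type*) {K : Type*} [Field F] [Field K] [Algebra F K]

/-- The paper's `ℚ_p^{(i)}` is `conjugateSpan ℚ_[p] (π i)`. -/
def conjugateSpan (x : K) : Submodule F K :=
  span F {y | ∃ σ : K ≃ₐ[F] K, y = σ x}

variable {F}

theorem conjugateSpan_le_iff {x : K} {S : Submodule F K} :
    conjugateSpan F x ≤ S ↔ ∀ σ : K ≃ₐ[F] K, σ x ∈ S := by
  simp only [conjugateSpan, span_le, Set.ofPred_subset, forall_exists_index,
    forall_eq_apply_imp_iff, SetLike.mem_coe]

theorem apply_mem_conjugateSpan (x : K) (σ : K ≃ₐ[F] K) : σ x ∈ conjugateSpan F x :=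
  subset_span ⟨σ, rfl⟩

theorem finrank_conjugateSpan_one_le : finrank F (conjugateSpan F (1 : K)) ≤ 1 := by
  have hle : conjugateSpan F (1 : K) ≤ F ∙ 1 :=
    conjugateSpan_le_iff.mpr fun σ => by rw [map_one]; exact mem_span_singleton_self 1
  exact (finrank_mono hle).trans_eq (finrank_span_singleton one_ne_zero)

theorem IsPrimitiveRoot.finrank_conjugateSpan_le_totient_mul {ζ : K} {Q n : ℕ}
    (hζ : IsPrimitiveRoot ζ (Q * n)) (hQ : 0 < Q) (hn : 1 < n) :
    finrank F (conjugateSpan F ζ) ≤ Q.totient * (n - 1) := by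
  classical
  have hQn : 0 < Q * n := Nat.mul_pos hQ (by omega)
  have : NeZero (Q * n) := ⟨hQn.ne'⟩
  have hω : IsPrimitiveRoot (ζ ^ Q) n := hζ.pow hQn rfl
  -- a primitive root `ζ ^ a` is `ζ ^ (a % Q) * (ζ ^ Q) ^ (a / Q)`, with `a % Q` prime to `Q`
  have hle : conjugateSpan F ζ ≤
      span F (image₂ (fun b j => ζ ^ b * (ζ ^ Q) ^ j) ((range Q).filter Q.Coprime) (range n) :
        Set K) := by
    refine conjugateSpan_le_iff.mpr fun σ => subset_span ?_
    have hσ := hζ.map_of_injective σ.injective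
    obtain ⟨a, ha, hζa⟩ := hζ.eq_pow_of_pow_eq_one hσ.pow_eq_one
    have hcop : (Q * n).Coprime a := ((hζ.pow_iff_coprime hQn a).mp (hζa ▸ hσ)).symm
    refine mem_image₂.mpr ⟨a % Q, ?_, a / Q, ?_, ?_⟩
    · exact mem_filter.mpr ⟨mem_range.mpr (Nat.mod_lt a hQ),
        by rw [Nat.Coprime, Nat.gcd_comm, ← Nat.gcd_rec]; exact hcop.coprime_mul_right⟩
    · exact mem_range.mpr ((Nat.div_lt_iff_lt_mul hQ).mpr (by rwa [mul_comm]))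
    · rw [← pow_mul, ← pow_add, Nat.mod_add_div, hζa]
  refine (finrank_mono hle).trans ?_
  refine finrank_span_image₂_le_of_sum_eq_zero _ _ _ (fun b _ => ?_) |>.trans_eq ?_
  · rw [← mul_sum, hω.geom_sum_eq_zero hn, mul_zero]
  · rw [card_range, Nat.totient]

theorem IsPrimitiveRoot.finrank_conjugateSpan_add_algebraMap_le {ω : K} {n : ℕ} {c : F}
    (hω : IsPrimitiveRoot ω n) (hc : ((n - 1 : ℕ) : F) * c = 1) :
    finrank F (conjugateSpan F (ω + algebraMap F K c)) ≤ n - 2 := by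
  classical
  have hn : 1 < n := by
    by_contra! h
    interval_cases n <;> simp at hc
  have : NeZero n := ⟨by omega⟩
  have hle : conjugateSpan F (ω + algebraMap F K c) ≤
      span F (image₂ (fun _ a => ω ^ a + algebraMap F K c) ({()} : Finset Unit)
        ((range n).erase 0) : Set K) := by
    refine conjugateSpan_le_iff.mpr fun σ => subset_span ?_
    have hσ := hω.map_of_injective σ.injective
    obtain ⟨a, ha, hωa⟩ := hω.eq_pow_of_pow_eq_one hσ.pow_eq_one
    have ha0 : a ≠ 0 := by
      rintro rfl
      exact hσ.ne_one hn (by rw [← hωa, pow_zero])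
    rw [map_add, AlgEquiv.commutes, ← hωa]
    exact mem_image₂_of_mem (mem_singleton_self ()) (mem_erase.mpr ⟨ha0, mem_range.mpr ha⟩)
  refine (finrank_mono hle).trans ?_
  refine finrank_span_image₂_le_of_sum_eq_zero _ _ _ (fun _ _ => ?_) |>.trans_eq ?_
  · rw [sum_add_distrib, sum_erase_eq_sub (mem_range.mpr (by omega)), hω.geom_sum_eq_zero hn,
      sum_const, card_erase_of_mem (mem_range.mpr (by omega)), card_range, nsmul_eq_mul,
      ← map_natCast (algebraMap F K), ← map_mul, hc, map_one, zero_sub, pow_zero, neg_add_cancel]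
  · rw [card_singleton, card_erase_of_mem (mem_range.mpr (by omega)), card_range]
    omega

theorem IsPrimitiveRoot.exists_algEquiv_apply_eq_iff [Normal F K] {n : ℕ} [NeZero (n : F)]
    {ζ w : K} (hζ : IsPrimitiveRoot ζ n) (hirr : Irreducible (cyclotomic n F)) :
    (∃ σ : K ≃ₐ[F] K, σ ζ = w) ↔ IsPrimitiveRoot w n := by
  refine ⟨fun ⟨σ, hσ⟩ => hσ ▸ hζ.map_of_injective σ.injective, fun hw => ?_⟩
  refine minpoly.exists_algEquiv_of_root (Algebra.IsAlgebraic.isAlgebraic w) ?_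
  rw [← hw.minpoly_eq_cyclotomic_of_irreducible hirr,
    hζ.minpoly_eq_cyclotomic_of_irreducible hirr]
  exact minpoly.aeval F ζ

theorem IntermediateField.toSubmodule_adjoin_simple_le {x : K} (hx : IsAlgebraic F x)
    {S : Submodule F K} (h : ∀ k : ℕ, x ^ k ∈ S) :
    Subalgebra.toSubmodule F⟮x⟯.toSubalgebra ≤ S := by
  rw [adjoin_simple_toSubalgebra_of_isAlgebraic hx, Algebra.adjoin_eq_span, span_le]
  rintro _ hy
  obtain ⟨k, rfl⟩ := Submonoid.mem_closure_singleton.mp hy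
  exact h k

theorem IsPrimitiveRoot.mem_adjoin_of_pow_eq_one {ζ u : K} {n : ℕ} [NeZero n]
    (hζ : IsPrimitiveRoot ζ n) (hu : u ^ n = 1) : u ∈ F⟮ζ⟯ := by
  obtain ⟨a, -, rfl⟩ := hζ.eq_pow_of_pow_eq_one hu
  exact pow_mem (mem_adjoin_simple_self F ζ) a

theorem IsPrimitiveRoot.finrank_adjoin_eq_totient {ζ : K} {n : ℕ} [NeZero (n : F)]
    (hζ : IsPrimitiveRoot ζ n) (hirr : Irreducible (cyclotomic n F)) :
    finrank F F⟮ζ⟯ = n.totient := by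
  have := NeZero.of_neZero_natCast F (n := n)
  rw [adjoin.finrank (hζ.isIntegral (NeZero.pos n)).tower_top,
    ← hζ.minpoly_eq_cyclotomic_of_irreducible hirr, natDegree_cyclotomic]

end Conjugates

namespace Padic

variable {p : ℕ} [hp : Fact p.Prime]

theorem isEisensteinAt_cyclotomic_prime_pow_comp_X_add_one (k : ℕ) :
    ((cyclotomic (p ^ (k + 1)) ℤ_[p]).comp (X + 1)).IsEisensteinAt (Ideal.span {(p : ℤ_[p])}) := by
  have hprime : Prime (p : ℤ_[p]) := PadicInt.prime_p
  have hweak := (cyclotomic_prime_pow_comp_X_add_one_isEisensteinAt p k).isWeaklyEisensteinAt.map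
    (Int.castRingHom ℤ_[p])
  rw [Polynomial.map_comp, map_cyclotomic, Polynomial.map_add, Polynomial.map_X,
    Polynomial.map_one, Ideal.submodule_span_eq, Ideal.map_span, Set.image_singleton,
    eq_intCast, Int.cast_natCast] at hweak
  refine (cyclotomic.monic _ _).comp_X_add_C 1 |>.isEisensteinAt_of_mem_of_notMem
    (Ideal.span_singleton_ne_top hprime.not_isUnit) (fun hn => hweak.mem hn) ?_
  rw [coeff_zero_eq_eval_zero, eval_comp, eval_add, eval_X, eval_one, zero_add,
    eval_one_cyclotomic_prime_pow, Ideal.span_singleton_pow, Ideal.mem_span_singleton]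
  simpa using (pow_dvd_pow_iff (m := 1) (n := 2) hprime.ne_zero hprime.not_isUnit).not

theorem irreducible_cyclotomic_prime_pow (n : ℕ) : Irreducible (cyclotomic (p ^ n) ℚ_[p]) := by
  obtain _ | k := n
  · simpa using irreducible_X_sub_C (1 : ℚ_[p])
  rw [← map_cyclotomic _ (algebraMap ℤ_[p] ℚ_[p]),
    ← (cyclotomic.monic _ _).irreducible_iff_irreducible_map_fraction_map,
    ← MulEquiv.irreducible_iff (algEquivAevalXAddC (1 : ℤ_[p]))]
  have hprime : Prime (p : ℤ_[p]) := PadicInt.prime_p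
  refine (isEisensteinAt_cyclotomic_prime_pow_comp_X_add_one k).irreducible
    ((Ideal.span_singleton_prime hprime.ne_zero).mpr hprime)
    ((cyclotomic.monic _ _).comp_X_add_C 1).isPrimitive ?_
  rw [natDegree_comp, natDegree_cyclotomic, ← C_1, natDegree_X_add_C, mul_one]
  exact Nat.totient_pos.mpr (pow_pos hp.out.pos _)

end Padic

section CyclotomicTower

variable {p : ℕ} [hp : Fact p.Prime] {K : Type*} [Field K] [Algebra ℚ_[p] K] {ζ π : ℕ → K}

theorem finrank_conjugateSpan_succ_add_totient_le (hζ : ∀ n, IsPrimitiveRoot (ζ n) (p ^ n))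
    (hπ1 : π 1 = ζ 1 + algebraMap ℚ_[p] K ((p - 1 : ℚ_[p])⁻¹)) (hπ : ∀ n, 1 < n → π n = ζ n)
    (i : ℕ) :
    finrank ℚ_[p] (conjugateSpan ℚ_[p] (π (i + 1))) + (p ^ i).totient ≤ (p ^ (i + 1)).totient := by
  obtain _ | m := i
  · have hc : ((p - 1 : ℕ) : ℚ_[p]) * (p - 1 : ℚ_[p])⁻¹ = 1 := by
      rw [Nat.cast_sub hp.out.one_le, Nat.cast_one]
      exact mul_inv_cancel₀ (sub_ne_zero.mpr (Nat.cast_ne_one.mpr hp.out.one_lt.ne'))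
    have hζ1 : IsPrimitiveRoot (ζ 1) p := by simpa using hζ 1
    have := hζ1.finrank_conjugateSpan_add_algebraMap_le hc
    rw [hπ1, pow_one, pow_zero, Nat.totient_one, Nat.totient_prime hp.out]
    have := hp.out.two_le
    omega
  · have hζm : IsPrimitiveRoot (ζ (m + 1 + 1)) (p ^ (m + 1) * p) := pow_succ p (m + 1) ▸ hζ _
    have := hζm.finrank_conjugateSpan_le_totient_mul (F := ℚ_[p]) (pow_pos hp.out.pos _)
      hp.out.one_lt
    rw [hπ _ (by omega), pow_succ' p (m + 1),
      Nat.totient_mul_of_prime_of_dvd hp.out (dvd_pow_self p m.succ_ne_zero)]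
    calc _ ≤ (p ^ (m + 1)).totient * (p - 1) + (p ^ (m + 1)).totient := by omega
      _ = p * (p ^ (m + 1)).totient := by
        rw [← Nat.mul_add_one, Nat.sub_add_cancel hp.out.one_le, mul_comm]

theorem sum_finrank_conjugateSpan_le_totient (hζ : ∀ n, IsPrimitiveRoot (ζ n) (p ^ n))
    (hπ0 : π 0 = 1) (hπ1 : π 1 = ζ 1 + algebraMap ℚ_[p] K ((p - 1 : ℚ_[p])⁻¹))
    (hπ : ∀ n, 1 < n → π n = ζ n) (n : ℕ) :
    ∑ i : Fin (n + 1), finrank ℚ_[p] (conjugateSpan ℚ_[p] (π i)) ≤ (p ^ n).totient := by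
  rw [Fin.sum_univ_eq_sum_range (fun i => finrank ℚ_[p] (conjugateSpan ℚ_[p] (π i)))]
  refine sum_range_succ_le_of_add_le (f := fun i => (p ^ i).totient) ?_
    (finrank_conjugateSpan_succ_add_totient_le hζ hπ1 hπ) n
  rw [hπ0, pow_zero, Nat.totient_one]
  exact finrank_conjugateSpan_one_le

theorem iSup_conjugateSpan_le_adjoin (hζ : ∀ n, IsPrimitiveRoot (ζ n) (p ^ n)) (hπ0 : π 0 = 1)
    (hπ1 : π 1 = ζ 1 + algebraMap ℚ_[p] K ((p - 1 : ℚ_[p])⁻¹)) (hπ : ∀ n, 1 < n → π n = ζ n)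
    (n : ℕ) :
    ⨆ i : Fin (n + 1), conjugateSpan ℚ_[p] (π i) ≤
      Subalgebra.toSubmodule ℚ_[p]⟮ζ n⟯.toSubalgebra := by
  have : NeZero (p ^ n) := ⟨pow_ne_zero _ hp.out.ne_zero⟩
  have hroot : ∀ i ≤ n, ∀ σ : K ≃ₐ[ℚ_[p]] K, σ (ζ i) ∈ ℚ_[p]⟮ζ n⟯ := fun i hi σ =>
    (hζ n).mem_adjoin_of_pow_eq_one (by
      rw [← map_pow, ((hζ i).pow_eq_one_iff_dvd _).mpr (pow_dvd_pow p hi), map_one])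
  have hπmem : ∀ i ≤ n, ∀ σ : K ≃ₐ[ℚ_[p]] K, σ (π i) ∈ ℚ_[p]⟮ζ n⟯
    | 0, _, σ => by rw [hπ0, map_one]; exact one_mem _
    | 1, hi, σ => by
      rw [hπ1, map_add, AlgEquiv.commutes]
      exact add_mem (hroot 1 hi σ) (IntermediateField.algebraMap_mem _ _)
    | i + 2, hi, σ => by rw [hπ _ (by omega)]; exact hroot _ hi σ
  exact iSup_le fun i => conjugateSpan_le_iff.mpr (hπmem i (Nat.lt_succ_iff.mp i.isLt))

theorem adjoin_le_iSup_conjugateSpan [Normal ℚ_[p] K] (hζ : ∀ n, IsPrimitiveRoot (ζ n) (p ^ n))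
    (hπ0 : π 0 = 1) (hπ1 : π 1 = ζ 1 + algebraMap ℚ_[p] K ((p - 1 : ℚ_[p])⁻¹))
    (hπ : ∀ n, 1 < n → π n = ζ n) (n : ℕ) :
    Subalgebra.toSubmodule ℚ_[p]⟮ζ n⟯.toSubalgebra ≤
      ⨆ i : Fin (n + 1), conjugateSpan ℚ_[p] (π i) := by
  have hS : ∀ i ≤ n, ∀ σ : K ≃ₐ[ℚ_[p]] K, σ (π i) ∈ ⨆ i : Fin (n + 1), conjugateSpan ℚ_[p] (π i) :=
    fun i hi σ => mem_iSup_of_mem (⟨i, by omega⟩ : Fin (n + 1)) (apply_mem_conjugateSpan _ σ)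
  refine toSubmodule_adjoin_simple_le (Algebra.IsAlgebraic.isAlgebraic _) fun k => ?_
  -- `ζ n ^ k` is a primitive `p ^ m`-th root of unity for some `m ≤ n`, so a conjugate of `ζ m`
  obtain ⟨m, hm, hord⟩ := (Nat.dvd_prime_pow hp.out).mp (orderOf_dvd_of_pow_eq_one
    (by rw [← pow_mul, mul_comm, pow_mul, (hζ n).pow_eq_one, one_pow] : (ζ n ^ k) ^ p ^ n = 1))
  obtain ⟨σ, hσ⟩ := ((hζ m).exists_algEquiv_apply_eq_iff
    (Padic.irreducible_cyclotomic_prime_pow m)).mpr (hord ▸ IsPrimitiveRoot.orderOf _)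
  rw [← hσ]
  match m with
  | 0 =>
    have hζ0 : ζ 0 = 1 := IsPrimitiveRoot.one_right_iff.mp (by simpa using hζ 0)
    rw [hζ0, ← hπ0]
    exact hS 0 hm σ
  | 1 =>
    have h1 : σ (ζ 1) = σ (π 1) - (p - 1 : ℚ_[p])⁻¹ • σ (π 0) := by
      rw [hπ1, hπ0, map_add, AlgEquiv.commutes, map_one, ← Algebra.algebraMap_eq_smul_one,
        add_sub_cancel_right]
    rw [h1]
    exact sub_mem (hS 1 hm σ) (smul_mem _ _ (hS 0 (Nat.zero_le n) σ))
  | m + 2 => rw [← hπ _ (by omega)]; exact hS _ hm σ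

end CyclotomicTower

theorem cyclotomic_direct_sum_decomposition_general (p : ℕ) [Fact p.Prime]
    (K : Type*) [Field K] [Algebra ℚ_[p] K] [IsAlgClosed K] [Algebra.IsAlgebraic ℚ_[p] K]
    (ζ : ℕ → K)
    (hζ : ∀ n, IsPrimitiveRoot (ζ n) (p ^ n))
    (π : ℕ → K)
    (hπ0 : π 0 = 1)
    (hπ1 : π 1 = ζ 1 + algebraMap ℚ_[p] K ((p - 1 : ℚ_[p])⁻¹))
    (hπ : ∀ n, 1 < n → π n = ζ n)
    (n : ℕ) :
    iSupIndep (fun i : Fin (n + 1) =>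
        Submodule.span ℚ_[p] {x : K | ∃ σ : K ≃ₐ[ℚ_[p]] K, x = σ (π i)}) ∧
    (⨆ i : Fin (n + 1),
        Submodule.span ℚ_[p] {x : K | ∃ σ : K ≃ₐ[ℚ_[p]] K, x = σ (π i)}) =
      Subalgebra.toSubmodule (adjoin ℚ_[p] ({ζ n} : Set K)).toSubalgebra := by
  have : IsAlgClosure ℚ_[p] K := ⟨‹_›, ‹_›⟩
  have : Normal ℚ_[p] K := IsAlgClosure.normal ℚ_[p] K
  have hsup := (iSup_conjugateSpan_le_adjoin hζ hπ0 hπ1 hπ n).antisymm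
    (adjoin_le_iSup_conjugateSpan hζ hπ0 hπ1 hπ n)
  refine ⟨?_, hsup⟩
  have : FiniteDimensional ℚ_[p] ℚ_[p]⟮ζ n⟯ :=
    adjoin.finiteDimensional (Algebra.IsIntegral.isIntegral _)
  have (i : Fin (n + 1)) : FiniteDimensional ℚ_[p] (conjugateSpan ℚ_[p] (π i)) :=
    finiteDimensional_of_le (hsup ▸ le_iSup (fun i : Fin (n + 1) => conjugateSpan ℚ_[p] (π i)) i)
  refine iSupIndep_of_sum_finrank_le (W := fun i : Fin (n + 1) => conjugateSpan ℚ_[p] (π i)) ?_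
  rw [hsup]
  exact (sum_finrank_conjugateSpan_le_totient hζ hπ0 hπ1 hπ n).trans_eq
    ((hζ n).finrank_adjoin_eq_totient (Padic.irreducible_cyclotomic_prime_pow n)).symm

/-- `ℚ_p(μ_{p^n})` decomposes as the internal direct sum
`⊕_{i=0}^n ℚ_p^{(i)}`, where `ℚ_p^{(i)}` is the `ℚ_p`-span of the Galois conjugates of
`π i` (with `π 0 = 1`, `π 1 = ζ_p + 1/(p-1)`, `π i = ζ_{p^i}` for `i > 1`). -/
theorem cyclotomic_direct_sum_decomposition (p : ℕ) [Fact p.Prime] (hodd : Odd p)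
    (K : Type*) [Field K] [Algebra ℚ_[p] K] [IsAlgClosed K] [Algebra.IsAlgebraic ℚ_[p] K]
    (ζ : ℕ → K)
    (hζ : ∀ n, IsPrimitiveRoot (ζ n) (p ^ n))
    (hcompat : ∀ n, ζ (n + 1) ^ p = ζ n)
    (π : ℕ → K)
    (hπ0 : π 0 = 1)
    (hπ1 : π 1 = ζ 1 + algebraMap ℚ_[p] K ((p - 1 : ℚ_[p])⁻¹))
    (hπ : ∀ n, 1 < n → π n = ζ n)
    (n : ℕ) :
    iSupIndep (fun i : Fin (n + 1) =>
        Submodule.span ℚ_[p] {x : K | ∃ σ : K ≃ₐ[ℚ_[p]] K, x = σ (π i)}) ∧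
    (⨆ i : Fin (n + 1),
        Submodule.span ℚ_[p] {x : K | ∃ σ : K ≃ₐ[ℚ_[p]] K, x = σ (π i)}) =
      Subalgebra.toSubmodule (adjoin ℚ_[p] ({ζ n} : Set K)).toSubalgebra :=
  cyclotomic_direct_sum_decomposition_general p K ζ hζ π hπ0 hπ1 hπ n
end

section
/- Let p be an odd prime, n ≥ 1, and η = a_0 + Σ_{i=1}^n a_i ζ_{p^i} with a_i ∈ ℚ_p and a_1 ≠ (p-1)a_0. Then the ℚ_p-vector space generated by {η^σ : σ ∈ Gal(ℚ_p(μ_{p^n})/ℚ_p)} equals ℚ_p + Σ_{r ∈ S} Σ_{σ} ℚ_p · ζ_{p^r}^σ, where S = {r ∈ [1,n] : a_r ≠ 0}. -/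
/-!
Every Galois conjugate of `η` has the form `a₀ + Σ aᵢ ζᵢ^t` with `p ∤ t`, and since
`Φ_{p^n}` is irreducible over `ℚ_p` (Eisenstein), every such `t` occurs. Averaging these
conjugates over `t ∈ u (1 + p^j ℤ)` kills the terms with `i > j`, so all partial sums
`a₀ + Σ_{i ≤ j} aᵢ ζᵢ^u` lie in the span; averaging the `j = 1` ones over `u = 1, …, p - 1`
leaves `((p - 1) a₀ - a₁) · 1`, and consecutive differences give `a_r ζ_r^u`.
-/

open Polynomial Finset

namespace PadicInt

variable {p : ℕ} [Fact p.Prime]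

theorem intCast_mem_span_pow_iff (k : ℤ) (n : ℕ) :
    (k : ℤ_[p]) ∈ Ideal.span {(p : ℤ_[p]) ^ n} ↔ (p : ℤ) ^ n ∣ k := by
  rw [← norm_le_pow_iff_mem_span_pow, norm_int_le_pow_iff_dvd]

end PadicInt

namespace Polynomial.IsEisensteinAt

variable {p : ℕ} [Fact p.Prime]

theorem map_padicInt {f : ℤ[X]} (hf : f.IsEisensteinAt (Submodule.span ℤ {(p : ℤ)})) :
    (f.map (Int.castRingHom ℤ_[p])).IsEisensteinAt (Ideal.span {(p : ℤ_[p])}) := by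
  have hpow (k : ℤ) (m : ℕ) :
      (k : ℤ_[p]) ∈ Ideal.span {(p : ℤ_[p])} ^ m ↔ k ∈ Submodule.span ℤ {(p : ℤ)} ^ m := by
    rw [Ideal.span_singleton_pow, PadicInt.intCast_mem_span_pow_iff, Ideal.submodule_span_eq,
      Ideal.span_singleton_pow, Ideal.mem_span_singleton]
  have hmem (k : ℤ) :
      (k : ℤ_[p]) ∈ Ideal.span {(p : ℤ_[p])} ↔ k ∈ Submodule.span ℤ {(p : ℤ)} := by
    simpa only [pow_one] using hpow k 1
  have hne : Int.castRingHom ℤ_[p] f.leadingCoeff ≠ 0 := fun h =>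
    hf.leading ((hmem _).1 (by rw [← eq_intCast (Int.castRingHom ℤ_[p]), h]; exact zero_mem _))
  refine ⟨?_, fun hn => ?_, ?_⟩
  · rw [leadingCoeff_map_of_leadingCoeff_ne_zero _ hne, eq_intCast, hmem]
    exact hf.leading
  · rw [natDegree_map_of_leadingCoeff_ne_zero _ hne] at hn
    rw [coeff_map, eq_intCast, hmem]
    exact hf.mem hn
  · rw [coeff_map, eq_intCast, hpow]
    exact hf.notMem

end Polynomial.IsEisensteinAt

theorem Polynomial.irreducible_cyclotomic_prime_pow_padic (p : ℕ) [Fact p.Prime] (m : ℕ) :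
    Irreducible (cyclotomic (p ^ m) ℚ_[p]) := by
  have hp : p.Prime := Fact.out
  refine cyclotomic_irreducible_pow_of_irreducible_pow hp m.le_succ ?_
  have hg : ((cyclotomic (p ^ (m + 1)) ℤ).comp (X + C 1)).Monic :=
    (cyclotomic.monic _ ℤ).comp (monic_X_add_C 1) (by rw [natDegree_X_add_C]; exact one_ne_zero)
  have hE := (cyclotomic_prime_pow_comp_X_add_one_isEisensteinAt p m).map_padicInt
  rw [← C_1] at hE
  have hdeg : 0 < (((cyclotomic (p ^ (m + 1)) ℤ).comp (X + C 1)).map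
      (Int.castRingHom ℤ_[p])).natDegree := by
    rw [hg.natDegree_map, natDegree_comp, natDegree_X_add_C, mul_one, natDegree_cyclotomic]
    exact Nat.totient_pos.2 (pow_pos hp.pos _)
  have hirr := hE.irreducible ((Ideal.span_singleton_prime (by exact_mod_cast hp.ne_zero)).2
    PadicInt.prime_p) (hg.map _).isPrimitive hdeg
  -- Gauss's lemma moves irreducibility to `ℚ_[p]`, then undo the shift `X ↦ X + 1`.
  rw [(hg.map _).irreducible_iff_irreducible_map_fraction_map (K := ℚ_[p]), map_map,
    RingHom.ext_int ((algebraMap ℤ_[p] ℚ_[p]).comp (Int.castRingHom ℤ_[p]))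
      (Int.castRingHom ℚ_[p]),
    map_comp, map_cyclotomic, Polynomial.map_add, map_X, map_C, eq_intCast, Int.cast_one,
    ← taylor_apply] at hirr
  exact (MulEquiv.irreducible_iff (taylorEquiv (1 : ℚ_[p]))).1 hirr

theorem IsPrimitiveRoot.exists_algEquiv_apply_eq_pow {F K : Type*} [Field F] [Field K]
    [Algebra F K] [Normal F K] {z : K} {N : ℕ} [NeZero (N : F)] (hz : IsPrimitiveRoot z N)
    (hirr : Irreducible (cyclotomic N F)) {t : ℕ} (ht : t.Coprime N) :
    ∃ σ : K ≃ₐ[F] K, σ z = z ^ t := by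
  have hmin : minpoly F (z ^ t) = minpoly F z := by
    rw [← (hz.pow_of_coprime t ht).minpoly_eq_cyclotomic_of_irreducible hirr,
      ← hz.minpoly_eq_cyclotomic_of_irreducible hirr]
  exact (Normal.minpoly_eq_iff_mem_orbit K).1 hmin

theorem pow_pow_sub_of_pow_succ {M : Type*} [Monoid M] {p : ℕ} {ζ : ℕ → M}
    (hcompat : ∀ n, ζ (n + 1) ^ p = ζ n) {i n : ℕ} (hin : i ≤ n) :
    ζ n ^ p ^ (n - i) = ζ i := by
  obtain ⟨k, rfl⟩ := Nat.exists_eq_add_of_le hin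
  rw [Nat.add_sub_cancel_left]
  clear hin
  induction k with
  | zero => simp
  | succ k ih => rw [← add_assoc, pow_succ', pow_mul, hcompat, ih]

theorem exists_algEquiv_forall_apply_eq_pow {F K : Type*} [Field F] [Field K] [Algebra F K]
    [Normal F K] {p : ℕ} {ζ : ℕ → K} (hζ : ∀ i, IsPrimitiveRoot (ζ i) (p ^ i))
    (hcompat : ∀ i, ζ (i + 1) ^ p = ζ i) {n : ℕ} [NeZero ((p ^ n : ℕ) : F)]
    (hirr : Irreducible (cyclotomic (p ^ n) F)) {t : ℕ} (ht : t.Coprime p) :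
    ∃ σ : K ≃ₐ[F] K, ∀ i ≤ n, σ (ζ i) = ζ i ^ t := by
  obtain ⟨σ, hσ⟩ := (hζ n).exists_algEquiv_apply_eq_pow hirr (ht.pow_right n)
  refine ⟨σ, fun i hi => ?_⟩
  rw [← pow_pow_sub_of_pow_succ hcompat hi, map_pow, hσ, ← pow_mul, mul_comm, pow_mul]

theorem IsPrimitiveRoot.exists_pow_eq_algEquiv_apply {F K : Type*} [Field F] [Field K]
    [Algebra F K] {p : ℕ} [Fact p.Prime] {z : K} {r : ℕ} (hz : IsPrimitiveRoot z (p ^ r))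
    (hr : r ≠ 0) (σ : K ≃ₐ[F] K) : ∃ t, t.Coprime p ∧ σ z = z ^ t :=
  ⟨_, (ZMod.val_coe_unit_coprime (hz.autToPow F σ)).coprime_dvd_right (dvd_pow_self p hr),
    (hz.autToPow_spec F σ).symm⟩

theorem IsPrimitiveRoot.sum_range_pow_mul_one_add {R : Type*} [CommRing R] [IsDomain R]
    {p : ℕ} (hp : p.Prime) {z : R} {i : ℕ} (hz : IsPrimitiveRoot z (p ^ i)) {n j u : ℕ}
    (hin : i ≤ n) (hu : u.Coprime p) :
    ∑ w ∈ range (p ^ (n - j)), z ^ (u * (1 + p ^ j * w)) =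
      if i ≤ j then p ^ (n - j) • z ^ u else 0 := by
  have hterm (w : ℕ) : z ^ (u * (1 + p ^ j * w)) = z ^ u * (z ^ (p ^ j * u)) ^ w := by
    rw [← pow_mul, ← pow_add]; ring_nf
  simp_rw [hterm, ← mul_sum]
  split_ifs with hij
  · have hone : z ^ (p ^ j * u) = 1 := by
      rw [hz.pow_eq_one_iff_dvd]; exact (pow_dvd_pow p hij).mul_right u
    rw [hone]
    simp [nsmul_eq_mul, mul_comm]
  · have hne : z ^ (p ^ j * u) ≠ 1 := by
      rw [Ne, hz.pow_eq_one_iff_dvd, ((Nat.coprime_comm.1 hu).pow_left i).dvd_mul_right,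
        Nat.pow_dvd_pow_iff_le_right hp.one_lt]
      exact hij
    have hroot : (z ^ (p ^ j * u)) ^ p ^ (n - j) = 1 := by
      rw [← pow_mul, hz.pow_eq_one_iff_dvd, mul_right_comm, ← pow_add,
        Nat.add_sub_cancel' (by omega)]
      exact (pow_dvd_pow p hin).mul_right u
    have hgeom : ∑ w ∈ range (p ^ (n - j)), (z ^ (p ^ j * u)) ^ w = 0 :=
      (mul_eq_zero.1 (by rw [geom_sum_mul, hroot, sub_self])).resolve_right (sub_ne_zero.2 hne)
    rw [hgeom, mul_zero]

theorem IsPrimitiveRoot.sum_range_pow_succ {R : Type*} [CommRing R] [IsDomain R] {z : R} {N : ℕ}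
    (hz : IsPrimitiveRoot z N) (hN : 1 < N) : ∑ i ∈ range (N - 1), z ^ (i + 1) = -1 := by
  have := hz.geom_sum_eq_zero hN
  rw [← Nat.sub_add_cancel hN.le, sum_range_succ'] at this
  simpa using eq_neg_of_add_eq_zero_left this

namespace ConjugateSpan

variable {F K : Type*} [Field F] [Field K] [Algebra F K] {p : ℕ} [hp : Fact p.Prime]
  [NeZero (p : F)] {ζ : ℕ → K} (hζ : ∀ i, IsPrimitiveRoot (ζ i) (p ^ i)) {n : ℕ} {a : ℕ → F}
  {W : Submodule F K} (hW : ∀ t, t.Coprime p → ∑ i ∈ range (n + 1), a i • ζ i ^ t ∈ W)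
include hζ hW

theorem sum_range_smul_pow_mem_of_pos {j : ℕ} (hj : 0 < j) (hjn : j ≤ n) {u : ℕ}
    (hu : u.Coprime p) : ∑ i ∈ range (j + 1), a i • ζ i ^ u ∈ W := by
  have hcop (w : ℕ) : (u * (1 + p ^ j * w)).Coprime p := by
    refine hu.mul_left ?_
    rw [← Nat.sub_add_cancel hj, pow_succ, mul_comm _ p, mul_assoc, Nat.coprime_add_mul_left_left]
    exact Nat.coprime_one_left p
  have hfilter : (range (n + 1)).filter (· ≤ j) = range (j + 1) := by
    ext i; simp only [mem_filter, mem_range]; omega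
  have hsum : ∑ w ∈ range (p ^ (n - j)), ∑ i ∈ range (n + 1),
      a i • ζ i ^ (u * (1 + p ^ j * w)) = p ^ (n - j) • ∑ i ∈ range (j + 1), a i • ζ i ^ u := by
    rw [sum_comm, ← hfilter, sum_filter, smul_sum]
    refine sum_congr rfl fun i hi => ?_
    rw [← smul_sum,
      (hζ i).sum_range_pow_mul_one_add hp.out (Nat.lt_succ_iff.1 (mem_range.1 hi)) hu]
    split_ifs <;> simp [smul_comm]
  have hne : (p ^ (n - j) : F) ≠ 0 := pow_ne_zero _ (NeZero.ne _)
  rw [← W.smul_mem_iff hne, ← Nat.cast_pow, Nat.cast_smul_eq_nsmul, ← hsum]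
  exact W.sum_mem fun w _ => hW _ (hcop w)

theorem one_mem (hn : 1 ≤ n) (ha : a 1 ≠ (p - 1) * a 0) : (1 : K) ∈ W := by
  have hζ0 : ζ 0 = 1 := by simpa using hζ 0
  have hζ1 : IsPrimitiveRoot (ζ 1) p := by simpa using hζ 1
  have hcop (i : ℕ) (hi : i < p - 1) : (i + 1).Coprime p :=
    (Nat.coprime_of_lt_prime (Nat.succ_ne_zero i) (by omega) hp.out).symm
  have hsum : ∑ i ∈ range (p - 1), ∑ k ∈ range (1 + 1), a k • ζ k ^ (i + 1) =
      ((p - 1) * a 0 - a 1) • (1 : K) := by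
    simp only [sum_range_succ, range_one, sum_singleton, hζ0, one_pow, sum_add_distrib,
      sum_const, card_range, ← smul_sum]
    rw [hζ1.sum_range_pow_succ hp.out.one_lt, ← Nat.cast_smul_eq_nsmul F,
      Nat.cast_pred hp.out.pos, smul_smul, smul_neg, ← sub_eq_add_neg, sub_smul]
  have hne : (p - 1) * a 0 - a 1 ≠ 0 := sub_ne_zero.2 ha.symm
  rw [← W.smul_mem_iff hne, ← hsum]
  exact W.sum_mem fun i hi =>
    sum_range_smul_pow_mem_of_pos hζ hW one_pos hn (hcop i (mem_range.1 hi))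

theorem sum_range_smul_pow_mem (hn : 1 ≤ n) (ha : a 1 ≠ (p - 1) * a 0) {j : ℕ}
    (hjn : j ≤ n) {u : ℕ} (hu : u.Coprime p) : ∑ i ∈ range (j + 1), a i • ζ i ^ u ∈ W := by
  rcases j.eq_zero_or_pos with rfl | hj
  · have hζ0 : ζ 0 = 1 := by simpa using hζ 0
    simpa [hζ0] using W.smul_mem (a 0) (one_mem hζ hW hn ha)
  · exact sum_range_smul_pow_mem_of_pos hζ hW hj hjn hu

theorem smul_pow_mem (hn : 1 ≤ n) (ha : a 1 ≠ (p - 1) * a 0) {r : ℕ} (hr : 0 < r)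
    (hrn : r ≤ n) {u : ℕ} (hu : u.Coprime p) : a r • ζ r ^ u ∈ W := by
  obtain ⟨k, rfl⟩ : ∃ k, r = k + 1 := ⟨r - 1, by omega⟩
  have h := sum_range_smul_pow_mem hζ hW hn ha hrn hu
  rw [sum_range_succ] at h
  exact (W.add_mem_iff_right (sum_range_smul_pow_mem hζ hW hn ha (by omega) hu)).1 h

end ConjugateSpan

theorem span_algEquiv_conjugates_le {F K : Type*} [CommSemiring F] [Semiring K] [Algebra F K]
    (x : ℕ → K) (n : ℕ) (a : ℕ → F) :
    Submodule.span F
        {y : K | ∃ σ : K ≃ₐ[F] K, y = σ (a 0 • (1 : K) + ∑ i ∈ Icc 1 n, a i • x i)} ≤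
      Submodule.span F ({1} ∪ ⋃ r ∈ {r : ℕ | 1 ≤ r ∧ r ≤ n ∧ a r ≠ 0},
        {y : K | ∃ σ : K ≃ₐ[F] K, y = σ (x r)}) := by
  rw [Submodule.span_le]
  rintro y ⟨σ, rfl⟩
  rw [map_add, map_smul, map_one, map_sum]
  refine add_mem (Submodule.smul_mem _ _ (Submodule.subset_span (Or.inl rfl)))
    (sum_mem fun i hi => ?_)
  rw [map_smul]
  by_cases hai : a i = 0
  · rw [hai, zero_smul]
    exact zero_mem _
  · refine Submodule.smul_mem _ _ (Submodule.subset_span (Or.inr ?_))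
    simp only [Set.mem_iUnion, Set.mem_ofPred_eq]
    exact ⟨i, ⟨(mem_Icc.1 hi).1, (mem_Icc.1 hi).2, hai⟩, σ, rfl⟩

theorem span_conjugates_eta_general (p : ℕ) [Fact p.Prime]
    (K : Type*) [Field K] [Algebra ℚ_[p] K] [IsAlgClosed K] [Algebra.IsAlgebraic ℚ_[p] K]
    (ζ : ℕ → K)
    (hζ : ∀ n, IsPrimitiveRoot (ζ n) (p ^ n))
    (hcompat : ∀ n, ζ (n + 1) ^ p = ζ n)
    (n : ℕ) (hn : 1 ≤ n) (a : ℕ → ℚ_[p])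
    (ha : a 1 ≠ (p - 1) * a 0)
    (η : K) (hη : η = a 0 • (1 : K) + ∑ i ∈ Finset.Icc 1 n, a i • ζ i) :
    Submodule.span ℚ_[p] {y : K | ∃ σ : K ≃ₐ[ℚ_[p]] K, y = σ η} =
      Submodule.span ℚ_[p]
        ({1} ∪ ⋃ r ∈ {r : ℕ | 1 ≤ r ∧ r ≤ n ∧ a r ≠ 0},
          {y : K | ∃ σ : K ≃ₐ[ℚ_[p]] K, y = σ (ζ r)}) := by
  have : IsAlgClosure ℚ_[p] K := ⟨‹_›, ‹_›⟩
  have hζ0 : ζ 0 = 1 := by simpa using hζ 0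
  have hW (t : ℕ) (ht : t.Coprime p) : ∑ i ∈ range (n + 1), a i • ζ i ^ t ∈
      Submodule.span ℚ_[p] {y : K | ∃ σ : K ≃ₐ[ℚ_[p]] K, y = σ η} := by
    obtain ⟨σ, hσ⟩ := exists_algEquiv_forall_apply_eq_pow hζ hcompat
      (irreducible_cyclotomic_prime_pow_padic p n) ht
    refine Submodule.subset_span ⟨σ, ?_⟩
    rw [hη, map_add, map_smul, map_one, map_sum, sum_range_eq_add_Ico _ (by positivity),
      Ico_add_one_right_eq_Icc, hζ0, one_pow]
    refine congrArg _ (sum_congr rfl fun i hi => ?_)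
    rw [map_smul, hσ i (mem_Icc.1 hi).2]
  refine le_antisymm (hη ▸ span_algEquiv_conjugates_le ζ n a) (Submodule.span_le.2 ?_)
  rintro y (hy | hy)
  · rw [Set.mem_singleton_iff.1 hy]
    exact ConjugateSpan.one_mem hζ hW hn ha
  · simp only [Set.mem_iUnion, Set.mem_ofPred_eq] at hy
    obtain ⟨r, ⟨hr1, hrn, har⟩, σ, rfl⟩ := hy
    obtain ⟨t, ht, hσ⟩ := (hζ r).exists_pow_eq_algEquiv_apply (by omega) σ
    rw [hσ, SetLike.mem_coe, ← Submodule.smul_mem_iff _ har]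
    exact ConjugateSpan.smul_pow_mem hζ hW hn ha hr1 hrn ht

/-- For `η = a_0 + Σ_{i=1}^n a_i ζ_{p^i}` with `a_1 ≠ (p-1)a_0`, the
`ℚ_p`-span of the Galois conjugates of `η` equals
`ℚ_p + Σ_{r ∈ S} Σ_σ ℚ_p · ζ_{p^r}^σ`, where `S = {r ∈ [1,n] : a_r ≠ 0}`. -/
theorem span_conjugates_eta (p : ℕ) [Fact p.Prime] (hodd : Odd p)
    (K : Type*) [Field K] [Algebra ℚ_[p] K] [IsAlgClosed K] [Algebra.IsAlgebraic ℚ_[p] K]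
    (ζ : ℕ → K)
    (hζ : ∀ n, IsPrimitiveRoot (ζ n) (p ^ n))
    (hcompat : ∀ n, ζ (n + 1) ^ p = ζ n)
    (n : ℕ) (hn : 1 ≤ n) (a : ℕ → ℚ_[p])
    (ha : a 1 ≠ (p - 1) * a 0)
    (η : K) (hη : η = a 0 • (1 : K) + ∑ i ∈ Finset.Icc 1 n, a i • ζ i) :
    Submodule.span ℚ_[p] {y : K | ∃ σ : K ≃ₐ[ℚ_[p]] K, y = σ η} =
      Submodule.span ℚ_[p]
        ({1} ∪ ⋃ r ∈ {r : ℕ | 1 ≤ r ∧ r ≤ n ∧ a r ≠ 0},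
          {y : K | ∃ σ : K ≃ₐ[ℚ_[p]] K, y = σ (ζ r)}) :=
  span_conjugates_eta_general p K ζ hζ hcompat n hn a ha η hη
end

section
/- Let p be an odd prime, u ∈ 1 + pℤ_p a topological generator of 1 + pℤ_p, and j a nonzero integer with |j| < p. In the ring ℤ_p[γ]/(γ^{p^{n-1}} - 1), if m ≥ n then the element Φ_m(u^{-j}γ)/p = (u^{-jp^m} - 1)/(p(u^{-jp^{m-1}} - 1)) is a unit of ℤ_p; here Φ_m is the p^m-th cyclotomic polynomial. -/
/-
Write `b = u⁻ʲ`. Since `p ∤ j`, the element `b - 1` still has `p`-adic valuation exactly one,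
so by the lifting-the-exponent lemma (`p` odd) `b ^ p ^ s - 1 = p ^ (s + 1) * cₛ` with `cₛ` a
unit of `ℤ_p`. The quotient in question is therefore `c_m / c_(m-1)`.
-/

section

variable {R : Type*} [CommRing R]

theorem emultiplicity_units_inv_sub_one (p : R) (U : Rˣ) :
    emultiplicity p ((↑U⁻¹ : R) - 1) = emultiplicity p ((U : R) - 1) :=
  emultiplicity_eq_of_associated_right
    ⟨-U, by rw [Units.val_neg]; linear_combination (-1 : R) * U.inv_mul⟩

theorem emultiplicity_units_zpow_sub_one [IsDomain R] {p : R} (hp : Prime p) {U : Rˣ}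
    (hU : p ∣ (U : R) - 1) {k : ℤ} (hk : ¬p ∣ (k : R)) :
    emultiplicity p ((↑(U ^ k) : R) - 1) = emultiplicity p ((U : R) - 1) := by
  obtain ⟨n, hkn⟩ := Int.eq_nat_or_neg k
  have hn : ¬p ∣ (n : R) := by rcases hkn with rfl | rfl <;> simpa using hk
  have hpow : emultiplicity p ((↑(U ^ n) : R) - 1) = emultiplicity p ((U : R) - 1) := by
    simpa only [Units.val_pow_eq_pow_val, one_pow] using
      emultiplicity_pow_sub_pow_of_prime hp hU
        (fun h => hp.not_isUnit (isUnit_of_dvd_unit h U.isUnit)) hn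
  rcases hkn with rfl | rfl
  · rwa [zpow_natCast]
  · rw [zpow_neg, zpow_natCast, emultiplicity_units_inv_sub_one, hpow]

end

namespace PadicInt

variable {p : ℕ} [Fact p.Prime]

theorem emultiplicity_p_eq_valuation {x : ℤ_[p]} (hx : x ≠ 0) :
    emultiplicity (p : ℤ_[p]) x = x.valuation := by
  conv_lhs => rw [unitCoeff_spec hx]
  rw [emultiplicity_mul prime_p, emultiplicity_of_unit_right prime_p.not_isUnit,
    emultiplicity_pow_self_of_prime prime_p, zero_add]

theorem exists_eq_p_pow_mul_unit_of_emultiplicity_eq {x : ℤ_[p]} {k : ℕ}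
    (h : emultiplicity (p : ℤ_[p]) x = k) : ∃ c : ℤ_[p]ˣ, x = p ^ k * c := by
  have hx : x ≠ 0 := by rintro rfl; simp at h
  rw [emultiplicity_p_eq_valuation hx, Nat.cast_inj] at h
  exact ⟨unitCoeff hx, by rw [mul_comm, ← h]; exact unitCoeff_spec hx⟩

theorem p_dvd_intCast_iff (k : ℤ) : (p : ℤ_[p]) ∣ k ↔ (p : ℤ) ∣ k := by
  rw [← norm_lt_one_iff_dvd, norm_int_lt_one_iff_dvd]

theorem isUnit_of_p_dvd_sub_one {x : ℤ_[p]} (hx : (p : ℤ_[p]) ∣ x - 1) : IsUnit x :=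
  IsLocalRing.isUnit_of_mem_nonunits_one_sub_self x <|
    mem_nonunits.2 <| (norm_lt_one_iff_dvd _).2 <| dvd_sub_comm.1 hx

theorem coe_units_inv (c : ℤ_[p]ˣ) :
    ((↑c⁻¹ : ℤ_[p]) : ℚ_[p]) = ((c : ℤ_[p]) : ℚ_[p])⁻¹ :=
  map_units_inv (Coe.ringHom : ℤ_[p] →+* ℚ_[p]) c

theorem coe_units_zpow (c : ℤ_[p]ˣ) (k : ℤ) :
    ((↑(c ^ k) : ℤ_[p]) : ℚ_[p]) = ((c : ℤ_[p]) : ℚ_[p]) ^ k := by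
  obtain ⟨n, rfl | rfl⟩ := Int.eq_nat_or_neg k
  · simp
  · simp [coe_units_inv]

theorem emultiplicity_pow_p_pow_sub_one (hodd : Odd p) {b : ℤ_[p]} (hb : (p : ℤ_[p]) ∣ b - 1)
    (s : ℕ) :
    emultiplicity (p : ℤ_[p]) (b ^ p ^ s - 1) = emultiplicity (p : ℤ_[p]) (b - 1) + s := by
  have hndvd : ¬(p : ℤ_[p]) ∣ b := fun h =>
    prime_p.not_dvd_one (by simpa using dvd_sub h hb)
  simpa only [one_pow] using emultiplicity_pow_prime_pow_sub_pow_prime_pow prime_p hodd hb hndvd s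

theorem exists_unit_eq_pow_p_pow_sub_one_div (hodd : Odd p) {b : ℤ_[p]}
    (hb : emultiplicity (p : ℤ_[p]) (b - 1) = 1) {m : ℕ} (hm : m ≠ 0) :
    ∃ w : ℤ_[p]ˣ, ((b : ℚ_[p]) ^ p ^ m - 1) / (p * ((b : ℚ_[p]) ^ p ^ (m - 1) - 1)) =
      ((w : ℤ_[p]) : ℚ_[p]) := by
  have hdvd : (p : ℤ_[p]) ∣ b - 1 := dvd_of_emultiplicity_pos (by rw [hb]; exact one_pos)
  have hlte (s : ℕ) : emultiplicity (p : ℤ_[p]) (b ^ p ^ s - 1) = (s + 1 : ℕ) := by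
    rw [emultiplicity_pow_p_pow_sub_one hodd hdvd, hb, add_comm]; norm_cast
  obtain ⟨M, rfl⟩ := Nat.exists_eq_add_one_of_ne_zero hm
  obtain ⟨c₁, hc₁⟩ := exists_eq_p_pow_mul_unit_of_emultiplicity_eq (hlte (M + 1))
  obtain ⟨c₂, hc₂⟩ := exists_eq_p_pow_mul_unit_of_emultiplicity_eq (hlte M)
  refine ⟨c₁ * c₂⁻¹, ?_⟩
  have hp : (p : ℚ_[p]) ≠ 0 := by exact_mod_cast (Fact.out : p.Prime).ne_zero
  have hc₂ne : ((c₂ : ℤ_[p]) : ℚ_[p]) ≠ 0 := coe_ne_zero.2 c₂.ne_zero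
  rw [Nat.add_sub_cancel, Units.val_mul, coe_mul, coe_units_inv]
  have e₁ := congrArg ((↑) : ℤ_[p] → ℚ_[p]) hc₁
  have e₂ := congrArg ((↑) : ℤ_[p] → ℚ_[p]) hc₂
  push_cast at e₁ e₂
  rw [e₁, e₂]
  field_simp
  ring

end PadicInt

theorem cyclotomic_value_is_unit_general (p : ℕ) [Fact p.Prime] (hodd : Odd p)
    (u : ℤ_[p]) (hugen : (u - 1).valuation = 1)
    (j : ℤ) (hj : j ≠ 0) (hjp : |j| < (p : ℤ))
    (n m : ℕ) (hn : 1 ≤ n) (hm : n ≤ m) :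
    ∃ w : ℤ_[p]ˣ,
      (((u : ℚ_[p]) ^ (-j)) ^ (p ^ m) - 1) /
          ((p : ℚ_[p]) * (((u : ℚ_[p]) ^ (-j)) ^ (p ^ (m - 1)) - 1)) =
        ((w : ℤ_[p]) : ℚ_[p]) := by
  have hu : emultiplicity (p : ℤ_[p]) (u - 1) = 1 := by
    rw [PadicInt.emultiplicity_p_eq_valuation (fun h => by simp [h] at hugen), hugen, Nat.cast_one]
  have hpu : (p : ℤ_[p]) ∣ u - 1 := dvd_of_emultiplicity_pos (by rw [hu]; exact one_pos)
  obtain ⟨U, rfl⟩ := PadicInt.isUnit_of_p_dvd_sub_one hpu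
  have hpj : ¬(p : ℤ_[p]) ∣ ((-j : ℤ) : ℤ_[p]) := by
    rw [PadicInt.p_dvd_intCast_iff]
    exact fun h => hj (neg_eq_zero.1 (Int.eq_zero_of_abs_lt_dvd h (by rwa [abs_neg])))
  have hb := (emultiplicity_units_zpow_sub_one PadicInt.prime_p hpu hpj).trans hu
  obtain ⟨w, hw⟩ := PadicInt.exists_unit_eq_pow_p_pow_sub_one_div hodd hb (m := m) (by omega)
  exact ⟨w, by rw [← hw, PadicInt.coe_units_zpow]⟩

/-- Let `u` be a topological generator of `1 + pℤ_p` (i.e. `v_p(u-1) = 1`)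
and `j` a nonzero integer with `|j| < p`. For `m ≥ n ≥ 1`, the element
`Φ_m(u^{-j}γ)/p`, which in `ℤ_p[γ]/(γ^{p^{n-1}} - 1)` reduces to the scalar
`(u^{-jp^m} - 1)/(p(u^{-jp^{m-1}} - 1))`, is a unit of `ℤ_p`. -/
theorem cyclotomic_value_is_unit (p : ℕ) [Fact p.Prime] (hodd : Odd p)
    (u : ℤ_[p]) (hu : ∃ y : ℤ_[p], u = 1 + (p : ℤ_[p]) * y)
    (hugen : (u - 1).valuation = 1)
    (j : ℤ) (hj : j ≠ 0) (hjp : |j| < (p : ℤ))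
    (n m : ℕ) (hn : 1 ≤ n) (hm : n ≤ m) :
    ∃ w : ℤ_[p]ˣ,
      (((u : ℚ_[p]) ^ (-j)) ^ (p ^ m) - 1) /
          ((p : ℚ_[p]) * (((u : ℚ_[p]) ^ (-j)) ^ (p ^ (m - 1)) - 1)) =
        ((w : ℤ_[p]) : ℚ_[p]) :=
  cyclotomic_value_is_unit_general p hodd u hugen j hj hjp n m hn hm
end

section
/- Let p be an odd prime and n ≥ 1. Define ℚ_{p,n}^+ = {x ∈ ℚ_p(μ_{p^n}) : Tr_{n/m+1}(x) ∈ ℚ_p(μ_{p^m}) for all even m with 0 ≤ m ≤ n-1} and ℚ_{p,n}^- analogously with odd m. Then ℚ_{p,n}^+ ∩ ℚ_{p,n}^- = ℚ_p and ℚ_{p,n}^+ + ℚ_{p,n}^- = ℚ_p(μ_{p^n}). -/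
/-! Over a field of characteristic zero, `π_k x = [L_n : L_k]⁻¹ • Tr_{L_n/L_k} x` is a projection
of `L_n = ℚ_p(μ_{p^n})` onto `L_k = ℚ_p(μ_{p^k})`, and transitivity of the trace gives
`π_j ∘ π_k = π_{min j k}`. The trace condition at `m` says exactly `π_{m+1} x = π_m x`.
Telescoping, `x = π_0 x + ∑_{j<n} (π_{j+1} x - π_j x)`, and the `j`-th difference satisfies the
condition at every `m ≠ j`: so `π_0 x` plus the odd-`j` terms lies in `ℚ_{p,n}^+` and the even-`j`
terms in `ℚ_{p,n}^-`. An `x` satisfying every condition has `x = π_n x = π_0 x ∈ ℚ_p`. -/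

open IntermediateField

section StepKer

variable {R V : Type*} [Ring R] [AddCommGroup V] [Module R V]

def stepKer (P : ℕ → V →ₗ[R] V) (m : ℕ) : Submodule R V :=
  LinearMap.ker (P (m + 1) - P m)

variable {P : ℕ → V →ₗ[R] V}

theorem mem_stepKer_iff {m : ℕ} {x : V} : x ∈ stepKer P m ↔ P (m + 1) x = P m x := by
  rw [stepKer, LinearMap.mem_ker, LinearMap.sub_apply, sub_eq_zero]

theorem apply_zero_mem_stepKer (hP : ∀ j k x, P j (P k x) = P (min j k) x) (x : V) (m : ℕ) :
    P 0 x ∈ stepKer P m := by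
  rw [mem_stepKer_iff, hP, hP, Nat.min_zero, Nat.min_zero]

theorem sub_mem_stepKer_of_ne (hP : ∀ j k x, P j (P k x) = P (min j k) x) (x : V) {j m : ℕ}
    (hjm : j ≠ m) :
    P (j + 1) x - P j x ∈ stepKer P m := by
  rw [mem_stepKer_iff, map_sub, map_sub, hP, hP, hP, hP]
  rcases lt_or_gt_of_ne hjm with h | h
  · rw [min_eq_right (by omega : j + 1 ≤ m + 1), min_eq_right (by omega : j ≤ m + 1),
      min_eq_right (by omega : j + 1 ≤ m), min_eq_right (by omega : j ≤ m)]
  · rw [min_eq_left (by omega : m + 1 ≤ j + 1), min_eq_left (by omega : m + 1 ≤ j),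
      min_eq_left (by omega : m ≤ j + 1), min_eq_left (by omega : m ≤ j), sub_self, sub_self]

theorem apply_eq_apply_zero_of_forall_mem_stepKer {x : V} {k : ℕ}
    (hx : ∀ m < k, x ∈ stepKer P m) : P k x = P 0 x := by
  induction k with
  | zero => rfl
  | succ k ih =>
    rw [mem_stepKer_iff.1 (hx k k.lt_succ_self), ih fun m hm => hx m (hm.trans k.lt_succ_self)]

theorem forall_mem_stepKer_iff_mem_range (hP : ∀ j k x, P j (P k x) = P (min j k) x)
    {n : ℕ} (hPn : ∀ x, P n x = x) (x : V) :
    (∀ m < n, x ∈ stepKer P m) ↔ x ∈ LinearMap.range (P 0) := by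
  refine ⟨fun hx => ⟨x, ?_⟩, fun ⟨y, hy⟩ m _ => hy ▸ apply_zero_mem_stepKer hP y m⟩
  rw [← apply_eq_apply_zero_of_forall_mem_stepKer hx, hPn]

theorem exists_apply_eq_add_even_odd (hP : ∀ j k x, P j (P k x) = P (min j k) x) (x : V)
    (n : ℕ) :
    ∃ a b : V, (∀ m, Even m → a ∈ stepKer P m) ∧ (∀ m, Odd m → b ∈ stepKer P m) ∧
      P n x = a + b := by
  set δ : ℕ → V := fun j => P (j + 1) x - P j x
  refine ⟨P 0 x + ∑ j ∈ (Finset.range n).filter (¬Even ·), δ j,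
    ∑ j ∈ (Finset.range n).filter (Even ·), δ j, fun m hm => ?_, fun m hm => ?_, ?_⟩
  · refine add_mem (apply_zero_mem_stepKer hP x m) (Submodule.sum_mem _ fun j hj => ?_)
    refine sub_mem_stepKer_of_ne hP x ?_
    rintro rfl
    exact (Finset.mem_filter.1 hj).2 hm
  · refine Submodule.sum_mem _ fun j hj => sub_mem_stepKer_of_ne hP x ?_
    rintro rfl
    exact Nat.not_odd_iff_even.2 (Finset.mem_filter.1 hj).2 hm
  · rw [add_assoc, add_comm (∑ j ∈ _, _), Finset.sum_filter_add_sum_filter_not,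
      Finset.sum_range_sub (fun j => P j x), add_sub_cancel]

end StepKer

namespace IntermediateField

variable {F E : Type*} [Field F] [Field E] [Algebra F E] {A B C : IntermediateField F E}

noncomputable abbrev algebraOfLE (h : A ≤ B) : Algebra A B :=
  (inclusion h).toRingHom.toAlgebra

theorem isScalarTower_algebraOfLE (h : A ≤ B) :
    letI := algebraOfLE h; IsScalarTower F A B :=
  letI := algebraOfLE h; .of_algebraMap_eq fun _ => rfl

theorem finiteDimensional_algebraOfLE (h : A ≤ B) [FiniteDimensional F B] :
    letI := algebraOfLE h; FiniteDimensional A B :=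
  letI := algebraOfLE h; have := isScalarTower_algebraOfLE h; .right F A B

noncomputable def finrankOfLE (h : A ≤ B) : ℕ :=
  letI := algebraOfLE h; Module.finrank A B

theorem finrankOfLE_ne_zero (h : A ≤ B) [FiniteDimensional F B] : finrankOfLE h ≠ 0 :=
  letI := algebraOfLE h; have := finiteDimensional_algebraOfLE h; Module.finrank_pos.ne'

noncomputable def traceOfLE (h : A ≤ B) : B →ₗ[F] A :=
  letI := algebraOfLE h; haveI := isScalarTower_algebraOfLE h
  (Algebra.trace A B).restrictScalars F

theorem traceOfLE_inclusion (h : A ≤ B) (y : A) :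
    traceOfLE h (inclusion h y) = finrankOfLE h • y :=
  letI := algebraOfLE h; Algebra.trace_algebraMap y

theorem traceOfLE_trans (hab : A ≤ B) (hbc : B ≤ C) [FiniteDimensional F C] (x : C) :
    traceOfLE (hab.trans hbc) x = traceOfLE hab (traceOfLE hbc x) := by
  let := algebraOfLE hab; let := algebraOfLE hbc; let := algebraOfLE (hab.trans hbc)
  have : IsScalarTower A B C := .of_algebraMap_eq fun _ => rfl
  have : FiniteDimensional F B :=
    .of_injective (inclusion hbc).toLinearMap (inclusion_injective hbc)
  have := finiteDimensional_algebraOfLE hab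
  have := finiteDimensional_algebraOfLE hbc
  have : Module.Free A B := .of_divisionRing A B
  have : Module.Free B C := .of_divisionRing B C
  exact (Algebra.trace_trace x).symm

theorem traceOfLE_inclusion_traceOfLE (hab : A ≤ B) (hbc : B ≤ C) [FiniteDimensional F C]
    (x : C) : traceOfLE (hab.trans hbc) (inclusion hbc (traceOfLE hbc x)) =
      finrankOfLE hbc • traceOfLE (hab.trans hbc) x := by
  rw [traceOfLE_trans hab hbc, traceOfLE_inclusion, map_nsmul, ← traceOfLE_trans]

noncomputable def projOfLE (h : A ≤ B) : B →ₗ[F] B :=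
  (finrankOfLE h : F)⁻¹ • (inclusion h).toLinearMap ∘ₗ traceOfLE h

theorem projOfLE_apply (h : A ≤ B) (x : B) :
    projOfLE h x = (finrankOfLE h : F)⁻¹ • inclusion h (traceOfLE h x) := rfl

theorem coe_projOfLE (h : A ≤ B) (x : B) :
    (projOfLE h x : E) = (finrankOfLE h : F)⁻¹ • (traceOfLE h x : E) := rfl

theorem coe_projOfLE_mem (h : A ≤ B) (x : B) : (projOfLE h x : E) ∈ A := by
  rw [coe_projOfLE]
  exact A.smul_mem (traceOfLE h x).2

theorem projOfLE_congr {A' : IntermediateField F E} (hA : A = A') (h : A ≤ B) (h' : A' ≤ B) :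
    projOfLE h = projOfLE h' := by
  subst hA; rfl

theorem projOfLE_inclusion_traceOfLE (hab : A ≤ B) (hbc : B ≤ C) [FiniteDimensional F C]
    (x : C) : projOfLE (hab.trans hbc) (inclusion hbc (traceOfLE hbc x)) =
      finrankOfLE hbc • projOfLE (hab.trans hbc) x := by
  rw [projOfLE_apply, projOfLE_apply, traceOfLE_inclusion_traceOfLE hab hbc, map_nsmul,
    smul_comm]

theorem coe_mem_bot_iff (x : B) :
    (x : E) ∈ (⊥ : IntermediateField F E) ↔ x ∈ Set.range (algebraMap F B) := by
  rw [mem_bot]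
  exact ⟨fun ⟨r, hr⟩ => ⟨r, Subtype.ext hr⟩, fun ⟨r, hr⟩ => ⟨r, congrArg Subtype.val hr⟩⟩

variable [CharZero F]

theorem projOfLE_inclusion (h : A ≤ B) [FiniteDimensional F B] (y : A) :
    projOfLE h (inclusion h y) = inclusion h y := by
  rw [projOfLE, LinearMap.smul_apply, LinearMap.comp_apply, traceOfLE_inclusion,
    AlgHom.toLinearMap_apply, map_nsmul, ← Nat.cast_smul_eq_nsmul F, inv_smul_smul₀
    (Nat.cast_ne_zero.2 (finrankOfLE_ne_zero h))]

theorem coe_mem_iff_projOfLE_eq (h : A ≤ B) [FiniteDimensional F B] (x : B) :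
    (x : E) ∈ A ↔ projOfLE h x = x :=
  ⟨fun hx => projOfLE_inclusion h ⟨x, hx⟩, fun hx => hx ▸ coe_projOfLE_mem h x⟩

theorem mem_range_projOfLE_iff (h : A ≤ B) [FiniteDimensional F B] (x : B) :
    x ∈ LinearMap.range (projOfLE h) ↔ (x : E) ∈ A :=
  ⟨fun ⟨y, hy⟩ => hy ▸ coe_projOfLE_mem h y, fun hx => ⟨x, (coe_mem_iff_projOfLE_eq h x).1 hx⟩⟩

theorem projOfLE_projOfLE_of_le (hab : A ≤ B) (hbc : B ≤ C) [FiniteDimensional F C] (x : C) :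
    projOfLE (hab.trans hbc) (projOfLE hbc x) = projOfLE (hab.trans hbc) x := by
  have : FiniteDimensional F B :=
    .of_injective (inclusion hbc).toLinearMap (inclusion_injective hbc)
  rw [projOfLE_apply hbc, map_smul, projOfLE_inclusion_traceOfLE hab hbc,
    ← Nat.cast_smul_eq_nsmul F, inv_smul_smul₀ (Nat.cast_ne_zero.2 (finrankOfLE_ne_zero hbc))]

theorem projOfLE_projOfLE_of_ge (hab : A ≤ B) (hbc : B ≤ C) [FiniteDimensional F C] (x : C) :
    projOfLE hbc (projOfLE (hab.trans hbc) x) = projOfLE (hab.trans hbc) x :=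
  (coe_mem_iff_projOfLE_eq hbc _).1 (hab (coe_projOfLE_mem (hab.trans hbc) x))

theorem coe_projOfLE_mem_iff (hab : A ≤ B) (hbc : B ≤ C) [FiniteDimensional F C] (x : C) :
    (projOfLE hbc x : E) ∈ A ↔ projOfLE hbc x = projOfLE (hab.trans hbc) x := by
  rw [coe_mem_iff_projOfLE_eq (hab.trans hbc), projOfLE_projOfLE_of_le hab hbc, eq_comm]

theorem coe_traceOfLE_mem_iff (h : B ≤ C) [FiniteDimensional F C] (x : C) :
    (traceOfLE h x : E) ∈ A ↔ (projOfLE h x : E) ∈ A := by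
  rw [coe_projOfLE]
  exact (Submodule.smul_mem_iff (p := Subalgebra.toSubmodule A.toSubalgebra)
    (inv_ne_zero (Nat.cast_ne_zero.2 (finrankOfLE_ne_zero h)))).symm

end IntermediateField

section Chain

variable {F E : Type*} [Field F] [Field E] [Algebra F E] {L : ℕ → IntermediateField F E}

-- Capping the index at `n` makes `chainProj hL n k` the identity for `k ≥ n`, so that the
-- composition law `P j ∘ P k = P (min j k)` holds for all `j k`.
noncomputable def chainProj (hL : Monotone L) (n k : ℕ) : L n →ₗ[F] L n :=
  projOfLE (hL (min_le_right k n))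

theorem chainProj_of_le (hL : Monotone L) {n k : ℕ} (hk : k ≤ n) :
    chainProj hL n k = projOfLE (hL hk) :=
  projOfLE_congr (congrArg L (min_eq_left hk)) _ _

variable [CharZero F] [∀ k, FiniteDimensional F (L k)]

theorem chainProj_chainProj (hL : Monotone L) (n j k : ℕ) (x : L n) :
    chainProj hL n j (chainProj hL n k x) = chainProj hL n (min j k) x := by
  rcases le_total j k with hjk | hkj
  · rw [min_eq_left hjk]
    exact projOfLE_projOfLE_of_le (hL (min_le_min_right n hjk)) (hL (min_le_right k n)) x
  · rw [min_eq_right hkj]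
    exact projOfLE_projOfLE_of_ge (hL (min_le_min_right n hkj)) (hL (min_le_right j n)) x

theorem chainProj_self (hL : Monotone L) (n : ℕ) (x : L n) : chainProj hL n n x = x := by
  rw [chainProj_of_le hL le_rfl, ← coe_mem_iff_projOfLE_eq]
  exact x.2

theorem mem_range_chainProj_iff (hL : Monotone L) {n k : ℕ} (hk : k ≤ n) (x : L n) :
    x ∈ LinearMap.range (chainProj hL n k) ↔ (x : E) ∈ L k := by
  rw [chainProj_of_le hL hk]
  exact mem_range_projOfLE_iff _ x

theorem coe_traceOfLE_mem_iff_mem_stepKer (hL : Monotone L) {m n : ℕ} (hmn : m < n)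
    (x : L n) :
    (traceOfLE (hL hmn) x : E) ∈ L m ↔ x ∈ stepKer (chainProj hL n) m := by
  rw [mem_stepKer_iff, chainProj_of_le hL hmn, chainProj_of_le hL hmn.le, coe_traceOfLE_mem_iff,
    coe_projOfLE_mem_iff (hL m.le_succ)]

end Chain

theorem plus_minus_subspaces_general (p : ℕ) [Fact p.Prime]
    (K : Type*) [Field K] [Algebra ℚ_[p] K]
    (ζ : ℕ → K)
    (hζ : ∀ k, IsPrimitiveRoot (ζ k) (p ^ k))
    (hle : ∀ a b : ℕ, a ≤ b → adjoin ℚ_[p] ({ζ a} : Set K) ≤ adjoin ℚ_[p] ({ζ b} : Set K))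
    (n : ℕ) :
    let Qplus : Set ↥(adjoin ℚ_[p] ({ζ n} : Set K)) :=
      {x | ∀ m : ℕ, (hmn : m < n) → Even m →
        (letI : Algebra ↥(adjoin ℚ_[p] ({ζ (m + 1)} : Set K))
            ↥(adjoin ℚ_[p] ({ζ n} : Set K)) :=
          ((IntermediateField.inclusion (hle (m + 1) n hmn)).toRingHom).toAlgebra
         ((Algebra.trace (adjoin ℚ_[p] ({ζ (m + 1)} : Set K))
            (adjoin ℚ_[p] ({ζ n} : Set K)) x : ↥(adjoin ℚ_[p] ({ζ (m + 1)} : Set K))) : K)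
            ∈ adjoin ℚ_[p] ({ζ m} : Set K))}
    let Qminus : Set ↥(adjoin ℚ_[p] ({ζ n} : Set K)) :=
      {x | ∀ m : ℕ, (hmn : m < n) → Odd m →
        (letI : Algebra ↥(adjoin ℚ_[p] ({ζ (m + 1)} : Set K))
            ↥(adjoin ℚ_[p] ({ζ n} : Set K)) :=
          ((IntermediateField.inclusion (hle (m + 1) n hmn)).toRingHom).toAlgebra
         ((Algebra.trace (adjoin ℚ_[p] ({ζ (m + 1)} : Set K))
            (adjoin ℚ_[p] ({ζ n} : Set K)) x : ↥(adjoin ℚ_[p] ({ζ (m + 1)} : Set K))) : K)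
            ∈ adjoin ℚ_[p] ({ζ m} : Set K))}
    Qplus ∩ Qminus = Set.range (algebraMap ℚ_[p] ↥(adjoin ℚ_[p] ({ζ n} : Set K))) ∧
      ∀ x : ↥(adjoin ℚ_[p] ({ζ n} : Set K)), ∃ a ∈ Qplus, ∃ b ∈ Qminus, x = a + b := by
  intro Qplus Qminus
  have : ∀ k, FiniteDimensional ℚ_[p] (adjoin ℚ_[p] ({ζ k} : Set K)) := fun k =>
    adjoin.finiteDimensional ((hζ k).isIntegral (pow_pos (Fact.out : p.Prime).pos k)).tower_top
  have hL : Monotone fun k => adjoin ℚ_[p] ({ζ k} : Set K) := fun a b => hle a b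
  have h0 : adjoin ℚ_[p] ({ζ 0} : Set K) = ⊥ := by
    have hζ0 : IsPrimitiveRoot (ζ 0) 1 := by simpa using hζ 0
    rw [IsPrimitiveRoot.one_right_iff.1 hζ0, adjoin_one]
  have hplus : ∀ x, x ∈ Qplus ↔ ∀ m < n, Even m → x ∈ stepKer (chainProj hL n) m := fun x =>
    forall₂_congr fun m hmn => imp_congr_right fun _ => coe_traceOfLE_mem_iff_mem_stepKer hL hmn x
  have hminus : ∀ x, x ∈ Qminus ↔ ∀ m < n, Odd m → x ∈ stepKer (chainProj hL n) m := fun x =>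
    forall₂_congr fun m hmn => imp_congr_right fun _ => coe_traceOfLE_mem_iff_mem_stepKer hL hmn x
  refine ⟨Set.ext fun x => ?_, fun x => ?_⟩
  · rw [Set.mem_inter_iff, hplus, hminus, ← coe_mem_bot_iff, ← h0,
      ← mem_range_chainProj_iff hL n.zero_le,
      ← forall_mem_stepKer_iff_mem_range (chainProj_chainProj hL n) (chainProj_self hL n)]
    exact ⟨fun ⟨he, ho⟩ m hm => (Nat.even_or_odd m).elim (he m hm) (ho m hm),
      fun h => ⟨fun m hm _ => h m hm, fun m hm _ => h m hm⟩⟩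
  · obtain ⟨a, b, ha, hb, hx⟩ :=
      exists_apply_eq_add_even_odd (chainProj_chainProj hL n) x n
    rw [chainProj_self] at hx
    exact ⟨a, (hplus a).2 fun m _ hm => ha m hm, b, (hminus b).2 fun m _ hm => hb m hm, hx⟩

/-- With `ℚ_{p,n}^+` the set of `x ∈ ℚ_p(μ_{p^n})` whose traces down to
`ℚ_p(μ_{p^{m+1}})` land in `ℚ_p(μ_{p^m})` for all even `0 ≤ m ≤ n-1`, and `ℚ_{p,n}^-`
defined analogously with odd `m`, one has `ℚ_{p,n}^+ ∩ ℚ_{p,n}^- = ℚ_p` and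
`ℚ_{p,n}^+ + ℚ_{p,n}^- = ℚ_p(μ_{p^n})`. -/
theorem plus_minus_subspaces (p : ℕ) [Fact p.Prime] (hodd : Odd p)
    (K : Type*) [Field K] [Algebra ℚ_[p] K]
    (ζ : ℕ → K)
    (hζ : ∀ k, IsPrimitiveRoot (ζ k) (p ^ k))
    (hcompat : ∀ k, ζ (k + 1) ^ p = ζ k)
    (hle : ∀ a b : ℕ, a ≤ b → adjoin ℚ_[p] ({ζ a} : Set K) ≤ adjoin ℚ_[p] ({ζ b} : Set K))
    (n : ℕ) (hn : 1 ≤ n) :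
    let Qplus : Set ↥(adjoin ℚ_[p] ({ζ n} : Set K)) :=
      {x | ∀ m : ℕ, (hmn : m < n) → Even m →
        (letI : Algebra ↥(adjoin ℚ_[p] ({ζ (m + 1)} : Set K))
            ↥(adjoin ℚ_[p] ({ζ n} : Set K)) :=
          ((IntermediateField.inclusion (hle (m + 1) n hmn)).toRingHom).toAlgebra
         ((Algebra.trace (adjoin ℚ_[p] ({ζ (m + 1)} : Set K))
            (adjoin ℚ_[p] ({ζ n} : Set K)) x : ↥(adjoin ℚ_[p] ({ζ (m + 1)} : Set K))) : K)
            ∈ adjoin ℚ_[p] ({ζ m} : Set K))}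
    let Qminus : Set ↥(adjoin ℚ_[p] ({ζ n} : Set K)) :=
      {x | ∀ m : ℕ, (hmn : m < n) → Odd m →
        (letI : Algebra ↥(adjoin ℚ_[p] ({ζ (m + 1)} : Set K))
            ↥(adjoin ℚ_[p] ({ζ n} : Set K)) :=
          ((IntermediateField.inclusion (hle (m + 1) n hmn)).toRingHom).toAlgebra
         ((Algebra.trace (adjoin ℚ_[p] ({ζ (m + 1)} : Set K))
            (adjoin ℚ_[p] ({ζ n} : Set K)) x : ↥(adjoin ℚ_[p] ({ζ (m + 1)} : Set K))) : K)
            ∈ adjoin ℚ_[p] ({ζ m} : Set K))}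
    Qplus ∩ Qminus = Set.range (algebraMap ℚ_[p] ↥(adjoin ℚ_[p] ({ζ n} : Set K))) ∧
      ∀ x : ↥(adjoin ℚ_[p] ({ζ n} : Set K)), ∃ a ∈ Qplus, ∃ b ∈ Qminus, x = a + b :=
  plus_minus_subspaces_general p K ζ hζ hle n
end
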